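/- (Lemma 1(ii)). Let ℓ ≥ 2 and let g be a kernel of ℓ dimensions. Fix k ∈ {0,…,ℓ−2} and define the kernel g̃ by g̃(v_0,…,v_{ℓ−1}) = g(v_0,…,v_{k−1}, v_{k+1}, v_k, v_{k+2},…,v_{ℓ−1}) (input coordinates k and k+1 swapped). If D_g(k) > D_g(k+1), then D_{g̃}(k) < D_{g̃}(k+1). -/
import Mathlib


/-- The `i`-th partial distance of a kernel `g` of `ℓ` dimensions:
`D_g(i) = min { d_H(g(w•0•u), g(w•1•v)) : w ∈ {0,1}^i, u, v ∈ {0,1}^{ℓ−1−i} }`,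
phrased via pairs of inputs that agree on coordinates `< i` and differ as `0`/`1`
at coordinate `i`. -/
noncomputable def partialDist {ℓ : ℕ} (g : (Fin ℓ → ZMod 2) → (Fin ℓ → ZMod 2)) (i : ℕ) : ℕ :=
  sInf { d | ∃ x y : Fin ℓ → ZMod 2,
    (∀ j : Fin ℓ, (j : ℕ) < i → x j = y j) ∧
    (∀ j : Fin ℓ, (j : ℕ) = i → x j = 0 ∧ y j = 1) ∧
    d = hammingDist (g x) (g y) }

lemma pdSetNonempty {ℓ : ℕ} (g : (Fin ℓ → ZMod 2) → (Fin ℓ → ZMod 2)) (i : ℕ) :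
    { d | ∃ x y : Fin ℓ → ZMod 2,
      (∀ j : Fin ℓ, (j : ℕ) < i → x j = y j) ∧
      (∀ j : Fin ℓ, (j : ℕ) = i → x j = 0 ∧ y j = 1) ∧
      d = hammingDist (g x) (g y) }.Nonempty := by
  refine ⟨_, fun _ => 0, fun j => if (j : ℕ) = i then 1 else 0, ?_, ?_, rfl⟩
  · intro j hj
    simp [Nat.ne_of_lt hj]
  · intro j hj
    simp [hj]

theorem swap_partialDist_lt {ℓ : ℕ} (hℓ : 2 ≤ ℓ)
    (g : (Fin ℓ → ZMod 2) → (Fin ℓ → ZMod 2)) (hg : Function.Bijective g)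
    (k : ℕ) (hk : k ≤ ℓ - 2)
    (g' : (Fin ℓ → ZMod 2) → (Fin ℓ → ZMod 2))
    (hg' : ∀ v, g' v =
      g (v ∘ ⇑(Equiv.swap (⟨k, by omega⟩ : Fin ℓ) (⟨k + 1, by omega⟩ : Fin ℓ))))
    (hgt : partialDist g (k + 1) < partialDist g k) :
    partialDist g' k < partialDist g' (k + 1) := by
  have hk0 : k < ℓ := by omega
  have hk1 : k + 1 < ℓ := by omega
  have hg'' : ∀ v, g' v =
      g (v ∘ ⇑(Equiv.swap (⟨k, hk0⟩ : Fin ℓ) (⟨k + 1, hk1⟩ : Fin ℓ))) := hg'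
  have h1 : partialDist g' k ≤ partialDist g (k + 1) := by
    obtain ⟨x, y, hxy, hxyi, hd⟩ := Nat.sInf_mem (pdSetNonempty g (k + 1))
    apply Nat.sInf_le
    refine ⟨x ∘ ⇑(Equiv.swap (⟨k, hk0⟩ : Fin ℓ) (⟨k + 1, hk1⟩ : Fin ℓ)),
            y ∘ ⇑(Equiv.swap (⟨k, hk0⟩ : Fin ℓ) (⟨k + 1, hk1⟩ : Fin ℓ)), ?_, ?_, ?_⟩
    · clear hd
      intro j hj
      have hja : j ≠ (⟨k, hk0⟩ : Fin ℓ) := by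
        intro h
        have : (j : ℕ) = k := by rw [h]
        omega
      have hjb : j ≠ (⟨k + 1, hk1⟩ : Fin ℓ) := by
        intro h
        have : (j : ℕ) = k + 1 := by rw [h]
        omega
      simp only [Function.comp_apply, Equiv.swap_apply_of_ne_of_ne hja hjb]
      exact hxy j (by omega)
    · clear hd
      intro j hj
      have hj' : j = (⟨k, hk0⟩ : Fin ℓ) := by exact Fin.ext hj
      subst hj'
      simp only [Function.comp_apply, Equiv.swap_apply_left]
      exact hxyi ⟨k + 1, hk1⟩ rfl
    · rw [hg'', hg'']
      have hx : (x ∘ ⇑(Equiv.swap (⟨k, hk0⟩ : Fin ℓ) (⟨k + 1, hk1⟩ : Fin ℓ))) ∘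
          ⇑(Equiv.swap (⟨k, hk0⟩ : Fin ℓ) (⟨k + 1, hk1⟩ : Fin ℓ)) = x := by
        funext j; simp
      have hy : (y ∘ ⇑(Equiv.swap (⟨k, hk0⟩ : Fin ℓ) (⟨k + 1, hk1⟩ : Fin ℓ))) ∘
          ⇑(Equiv.swap (⟨k, hk0⟩ : Fin ℓ) (⟨k + 1, hk1⟩ : Fin ℓ)) = y := by
        funext j; simp
      rw [hx, hy]
      exact hd
  have h2 : partialDist g k ≤ partialDist g' (k + 1) := by
    obtain ⟨x, y, hxy, hxyi, hd⟩ := Nat.sInf_mem (pdSetNonempty g' (k + 1))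
    apply Nat.sInf_le
    refine ⟨x ∘ ⇑(Equiv.swap (⟨k, hk0⟩ : Fin ℓ) (⟨k + 1, hk1⟩ : Fin ℓ)),
            y ∘ ⇑(Equiv.swap (⟨k, hk0⟩ : Fin ℓ) (⟨k + 1, hk1⟩ : Fin ℓ)), ?_, ?_, ?_⟩
    · clear hd
      intro j hj
      have hja : j ≠ (⟨k, hk0⟩ : Fin ℓ) := by
        intro h
        have : (j : ℕ) = k := by rw [h]
        omega
      have hjb : j ≠ (⟨k + 1, hk1⟩ : Fin ℓ) := by
        intro h
        have : (j : ℕ) = k + 1 := by rw [h]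
        omega
      simp only [Function.comp_apply, Equiv.swap_apply_of_ne_of_ne hja hjb]
      exact hxy j (by omega)
    · clear hd
      intro j hj
      have hj' : j = (⟨k, hk0⟩ : Fin ℓ) := by exact Fin.ext hj
      subst hj'
      simp only [Function.comp_apply, Equiv.swap_apply_left]
      exact hxyi ⟨k + 1, hk1⟩ rfl
    · rw [← hg'', ← hg'']
      exact hd
  omega
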